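/- Let N₁ and N₂ be block Toeplitz matrices with block entries N^i_k = C_{F_i} A_{F_i}^{k-1} B for k > 0, N^i_0 = D, N^i_k = 0 for k < 0, where C_{F_i} = C + D F_i and A_{F_i} = A + B F_i (i = 1, 2). Let V be the block lower-triangular Toeplitz matrix with V_k = (F₁ - F₂) A_{F₁}^{k-1} B for k > 0, V_0 = I, V_k = 0 for k < 0. Then N₂ V = N₁. -/

import Mathlib

/-!
Read `V` as an input sequence fed into the system `(A_{F₂}, B, C_{F₂}, D)`. Since
`A_{F₁} = A_{F₂} + B (F₁ - F₂)`, the input `V_{k+1} = (F₁ - F₂) A_{F₁}^k B` acts as the feedback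
turning `A_{F₂}` into `A_{F₁}`, so the state after `k + 1` steps, `∑_{i+j=k} A_{F₂}^i B V_j`, is
`A_{F₁}^k B`. Its output `C_{F₂} A_{F₁}^k B + D V_{k+1}` is then `C_{F₁} A_{F₁}^k B = N¹_{k+1}`.
As both block sequences vanish at negative indices, every block of `N₂ V` is such a convolution.
-/

open Matrix

/-- Block entry `N_k = C_F A_F^{k-1} B` for `k > 0`, `D` for `k = 0`, `0` for `k < 0`,
where `C_F = C + D F` and `A_F = A + B F`. -/
noncomputable def Nblk {n p m : ℕ} (A : Matrix (Fin n) (Fin n) ℝ)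
    (B : Matrix (Fin n) (Fin p) ℝ) (C : Matrix (Fin m) (Fin n) ℝ)
    (D : Matrix (Fin m) (Fin p) ℝ) (F : Matrix (Fin p) (Fin n) ℝ) (k : ℤ) :
    Matrix (Fin m) (Fin p) ℝ :=
  if 0 < k then (C + D * F) * (A + B * F) ^ (k - 1).toNat * B else if k = 0 then D else 0

/-- Block entry `V_k = (F₁ - F₂) A_{F₁}^{k-1} B` for `k > 0`, `I` for `k = 0`, `0` for `k < 0`. -/
noncomputable def Vblk {n p : ℕ} (A : Matrix (Fin n) (Fin n) ℝ)
    (B : Matrix (Fin n) (Fin p) ℝ) (F₁ F₂ : Matrix (Fin p) (Fin n) ℝ) (k : ℤ) :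
    Matrix (Fin p) (Fin p) ℝ :=
  if 0 < k then (F₁ - F₂) * (A + B * F₁) ^ (k - 1).toNat * B else if k = 0 then 1 else 0

/-- The `s × (s+n)`-block Toeplitz matrix with `(l,j)`-th block `N_{n+l-j}`. -/
noncomputable def NToeplitz {n p m : ℕ} (s : ℕ) (A : Matrix (Fin n) (Fin n) ℝ)
    (B : Matrix (Fin n) (Fin p) ℝ) (C : Matrix (Fin m) (Fin n) ℝ)
    (D : Matrix (Fin m) (Fin p) ℝ) (F : Matrix (Fin p) (Fin n) ℝ) :
    Matrix (Fin s × Fin m) (Fin (s + n) × Fin p) ℝ :=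
  fun la jb => Nblk A B C D F ((n : ℤ) + (la.1 : ℤ) - (jb.1 : ℤ)) la.2 jb.2

/-- The `(s+n) × (s+n)`-block Toeplitz matrix with `(i,j)`-th block `V_{i-j}`. -/
noncomputable def VToeplitz {n p : ℕ} (s : ℕ) (A : Matrix (Fin n) (Fin n) ℝ)
    (B : Matrix (Fin n) (Fin p) ℝ) (F₁ F₂ : Matrix (Fin p) (Fin n) ℝ) :
    Matrix (Fin (s + n) × Fin p) (Fin (s + n) × Fin p) ℝ :=
  fun ia jb => Vblk A B F₁ F₂ ((ia.1 : ℤ) - (jb.1 : ℤ)) ia.2 jb.2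

open Finset

section CausalToeplitz

variable {l m n α : Type*} [Fintype m] [NonUnitalNonAssocSemiring α]
  {f : ℤ → Matrix l m α} {g : ℤ → Matrix m n α}

theorem sum_range_mul_eq_sum_antidiagonal (hf : ∀ k < 0, f k = 0) (hg : ∀ k < 0, g k = 0)
    {N j k : ℕ} (hN : j + k < N) :
    ∑ i ∈ range N, f (↑(j + k) - i) * g (i - j) =
      ∑ x ∈ antidiagonal k, f x.1 * g x.2 := by
  have hsub : Ico j (j + k + 1) ⊆ range N := by
    intro i hi
    simp only [mem_Ico, mem_range] at hi ⊢
    omega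
  rw [← sum_subset hsub, sum_Ico_eq_sum_range, ← Finset.Nat.sum_antidiagonal_swap,
    Finset.Nat.sum_antidiagonal_eq_sum_range_succ_mk]
  · refine sum_congr (by congr 1; omega) fun t ht => ?_
    have ht : t ≤ k := Nat.lt_succ_iff.mp (mem_range.mp ht)
    simp only [Prod.swap_prod_mk]
    congr 2 <;> push_cast [ht] <;> ring
  · intro i _ hi
    simp only [mem_Ico, not_and_or, not_le, not_lt] at hi
    rcases hi with hi | hi
    · rw [hg _ (by omega), Matrix.mul_zero]
    · rw [hf _ (by push_cast; omega), Matrix.zero_mul]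

theorem sum_range_mul_eq_zero_of_lt (hf : ∀ k < 0, f k = 0) (hg : ∀ k < 0, g k = 0)
    {N c j : ℕ} (hcj : c < j) :
    ∑ i ∈ range N, f (c - i) * g (i - j) = 0 := by
  refine sum_eq_zero fun i _ => ?_
  rcases le_or_gt i c with hic | hci
  · rw [hg _ (by omega), Matrix.mul_zero]
  · rw [hf _ (by omega), Matrix.zero_mul]

end CausalToeplitz

section Blocks

variable {n p m : ℕ} (A : Matrix (Fin n) (Fin n) ℝ) (B : Matrix (Fin n) (Fin p) ℝ)
  (C : Matrix (Fin m) (Fin n) ℝ) (D : Matrix (Fin m) (Fin p) ℝ) (F F₁ F₂ : Matrix (Fin p) (Fin n) ℝ)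

@[simp] theorem Nblk_zero : Nblk A B C D F 0 = D := by simp [Nblk]

@[simp] theorem Nblk_natCast_add_one (k : ℕ) :
    Nblk A B C D F (k + 1) = (C + D * F) * (A + B * F) ^ k * B := by
  simp [Nblk]

theorem Nblk_of_neg {k : ℤ} (hk : k < 0) : Nblk A B C D F k = 0 := by
  simp [Nblk, hk.not_gt, hk.ne]

@[simp] theorem Vblk_zero : Vblk A B F₁ F₂ 0 = 1 := by simp [Vblk]

@[simp] theorem Vblk_natCast_add_one (k : ℕ) :
    Vblk A B F₁ F₂ (k + 1) = (F₁ - F₂) * (A + B * F₁) ^ k * B := by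
  simp [Vblk]

theorem Vblk_of_neg {k : ℤ} (hk : k < 0) : Vblk A B F₁ F₂ k = 0 := by
  simp [Vblk, hk.not_gt, hk.ne]

theorem sum_antidiagonal_pow_mul_Vblk (k : ℕ) :
    ∑ x ∈ antidiagonal k, (A + B * F₂) ^ x.1 * B * Vblk A B F₁ F₂ x.2 = (A + B * F₁) ^ k * B := by
  induction k with
  | zero => simp
  | succ k ih =>
    have hA : A + B * F₁ = A + B * F₂ + B * (F₁ - F₂) := by rw [Matrix.mul_sub]; abel
    calc _ = B * ((F₁ - F₂) * (A + B * F₁) ^ k * B) +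
          (A + B * F₂) * ∑ x ∈ antidiagonal k, (A + B * F₂) ^ x.1 * B * Vblk A B F₁ F₂ x.2 := by
          rw [Finset.Nat.sum_antidiagonal_succ, Matrix.mul_sum]
          simp only [pow_zero, Matrix.one_mul, Nat.cast_add, Nat.cast_one, Vblk_natCast_add_one,
            pow_succ', Matrix.mul_assoc]
      _ = (A + B * F₁) ^ (k + 1) * B := by
          rw [ih, pow_succ', hA]
          simp only [Matrix.add_mul, Matrix.mul_assoc]
          abel

theorem sum_antidiagonal_Nblk_mul_Vblk (k : ℕ) :
    ∑ x ∈ antidiagonal k, Nblk A B C D F₂ x.1 * Vblk A B F₁ F₂ x.2 = Nblk A B C D F₁ k := by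
  cases k with
  | zero => simp
  | succ k =>
    have hC : C + D * F₁ = C + D * F₂ + D * (F₁ - F₂) := by rw [Matrix.mul_sub]; abel
    calc _ = D * ((F₁ - F₂) * (A + B * F₁) ^ k * B) + (C + D * F₂) *
          ∑ x ∈ antidiagonal k, (A + B * F₂) ^ x.1 * B * Vblk A B F₁ F₂ x.2 := by
          rw [Finset.Nat.sum_antidiagonal_succ, Matrix.mul_sum]
          simp only [Nat.cast_zero, Nblk_zero, Nat.cast_add, Nat.cast_one, Vblk_natCast_add_one,
            Nblk_natCast_add_one, Matrix.mul_assoc]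
      _ = _ := by
          rw [sum_antidiagonal_pow_mul_Vblk, Nat.cast_add, Nat.cast_one, Nblk_natCast_add_one, hC]
          simp only [Matrix.add_mul, Matrix.mul_assoc]
          abel

end Blocks

/-- `N₂ V = N₁`. -/
theorem NToeplitz_mul_VToeplitz {n p m : ℕ} (s : ℕ) (A : Matrix (Fin n) (Fin n) ℝ)
    (B : Matrix (Fin n) (Fin p) ℝ) (C : Matrix (Fin m) (Fin n) ℝ)
    (D : Matrix (Fin m) (Fin p) ℝ) (F₁ F₂ : Matrix (Fin p) (Fin n) ℝ) :
    NToeplitz s A B C D F₂ * VToeplitz s A B F₁ F₂ = NToeplitz s A B C D F₁ := by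
  ext ⟨l, a⟩ ⟨j, b⟩
  have hN : ∀ k < 0, Nblk A B C D F₂ k = 0 := fun _ => Nblk_of_neg A B C D F₂
  have hV : ∀ k < 0, Vblk A B F₁ F₂ k = 0 := fun _ => Vblk_of_neg A B F₁ F₂
  simp only [mul_apply, Fintype.sum_prod_type, NToeplitz, VToeplitz]
  simp only [← mul_apply, ← Matrix.sum_apply]
  rw [Fin.sum_univ_eq_sum_range (fun i => Nblk A B C D F₂ (n + l - i) * Vblk A B F₁ F₂ (i - j))]
  rcases le_or_gt (j : ℕ) (n + l) with hjl | hlj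
  · obtain ⟨k, hk⟩ := Nat.exists_eq_add_of_le hjl
    have hnl : (n : ℤ) + l = ↑((j : ℕ) + k) := by rw [← hk]; push_cast; ring
    rw [hnl, sum_range_mul_eq_sum_antidiagonal hN hV (by omega), sum_antidiagonal_Nblk_mul_Vblk]
    congr 2
    push_cast
    ring
  · rw [← Nat.cast_add, sum_range_mul_eq_zero_of_lt hN hV hlj, Nblk_of_neg]
    omega
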